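/- Let 1 ≤ i ≤ m−1 with v_2(m) < v_2(i). Then there exist a ∈ F_{2^n} with a^{2^m} ≠ a (i.e. a ∉ K_m) and y ∈ F_{2^n}, y ≠ 0, such that a^{2^i}·y^{2^{2i}} + (a + a^{2^m})^{2^i}·y^{2^{m+i}} + a·y = 0. -/

import Mathlib

open scoped Classical BigOperators

noncomputable section

/-- The finite field with `2^k` elements. -/
abbrev GF (k : ℕ) := GaloisField 2 k

noncomputable instance (k : ℕ) : Fintype (GF k) := Fintype.ofFinite _

/-- The absolute trace `Tr_{2^k/2}`, viewed as an element of `GF k`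
(its values lie in the prime field `{0,1}`). -/
def atr (k : ℕ) (x : GF k) : GF k := ∑ j ∈ Finset.range k, x ^ 2 ^ j

/-- `(-1)^b` for `b ∈ {0,1} ⊆ GF k`. -/
def chi (k : ℕ) (x : GF k) : ℤ := if x = 0 then 1 else -1

/-- The Walsh transform of a Boolean-valued function `f` on `GF k`
(`f` takes values in the prime field `{0,1}`). -/
def walsh (k : ℕ) (f : GF k → GF k) (ω : GF k) : ℤ :=
  ∑ x : GF k, chi k (f x + atr k (ω * x))

/-- The trace `Tr_{2^m/2}` of the subfield `K_m ⊆ GF (2*m)`, viewed inside `GF (2*m)`. -/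
def trKm (m : ℕ) (x : GF (2*m)) : GF (2*m) := ∑ j ∈ Finset.range m, x ^ 2 ^ j

/-- The subfield `K_m = {x : x^(2^m) = x}` of `GF (2*m)`, as a finset. -/
def Km (m : ℕ) : Finset (GF (2*m)) := Finset.univ.filter (fun x => x ^ 2 ^ m = x)

/-- `max_{a ≠ 0, ω} |W_{F_a}(ω)|` for a vectorial function `F` on `GF (2*m)`. -/
def maxAbsW (m : ℕ) (F : GF (2*m) → GF (2*m)) : ℕ :=
  Finset.sup ((Finset.univ.filter (fun a : GF (2*m) => a ≠ 0)) ×ˢ (Finset.univ : Finset (GF (2*m))))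
    (fun p => (walsh (2*m) (fun x => atr (2*m) (p.1 * F x)) p.2).natAbs)

/-- The nonlinearity `N_F = 2^(n-1) - (1/2) max_{a ≠ 0, ω} |W_{F_a}(ω)|`, `n = 2m`. -/
def nlin (m : ℕ) (F : GF (2*m) → GF (2*m)) : ℚ :=
  2 ^ (2*m - 1) - (maxAbsW m F : ℚ) / 2


/-!
Write `g = gcd(i, m)`, `m = r g`, `i = i' g`; the hypothesis `v₂(m) < v₂(i)` says exactly that
`r` is odd and `i'` is even, and `i < m` gives `r ≥ 3`. We take `a = z^(2^i+1) c` and `y = z⁻¹`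
with `z ∈ K_m` nonzero and `c^(2^m) = c + 1`. Then `a + a^(2^m) = z^(2^i+1)`, and the equation
becomes the Artin–Schreier equation `c^(2^i) + c = (z^(2^i-1))^(2^i)`.

We look for `c = w + A`. Here `w^(2^g) = w + 1` (such a `w` exists because `2^g + 1` divides
`2^n - 1`), so `w^(2^m) = w + 1` and `w^(2^i) = w`. The element `A ∈ K_m` must solve
`A^(2^i) + A = (z^(2^i-1))^(2^i)`. Since `r` is odd, a half trace gives such an `A` as soon as
`Tr_{K_m/𝔽_{2^g}}(z^(2^i-1)) = 0`. A nonzero `z` with this property exists. Otherwise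
`Tr(z^(2^i-1))^(2^g-1) = 1` for every `z ∈ K_mˣ`, so the sum of these values over `K_mˣ` is
`-1`.
But expanding the power writes it as a sum of power sums `∑ z^k` with `2^m - 1 ∤ k`, and all of
these vanish. The non-divisibility comes from comparing the two lowest base-`2^g` digits.
-/

open Finset

theorem pow_pow_eq_pow_pow_mod {M : Type*} [Monoid M] {x : M} {b n : ℕ} (hx : x ^ b ^ n = x)
    (k : ℕ) : x ^ b ^ k = x ^ b ^ (k % n) := by
  have h : Function.IsPeriodicPt (fun y : M => y ^ b) n x := by
    simpa [Function.IsPeriodicPt, Function.IsFixedPt, pow_iterate] using hx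
  simpa [pow_iterate] using (h.iterate_mod_apply k).symm

theorem even_and_odd_of_padicValNat_lt {a b g : ℕ} (hab : a.Coprime b) (hb : b ≠ 0)
    (hv : padicValNat 2 (b * g) < padicValNat 2 (a * g)) : Even a ∧ Odd b := by
  have hg : g ≠ 0 := by rintro rfl; simp at hv
  have ha : a ≠ 0 := by rintro rfl; simp at hv
  have ha2 : Even a := by
    by_contra h
    rw [padicValNat.mul ha hg, padicValNat.mul hb hg,
      padicValNat.eq_zero_of_not_dvd fun h2 => h (even_iff_two_dvd.2 h2)] at hv
    omega
  exact ⟨ha2, (hab.coprime_dvd_left (even_iff_two_dvd.1 ha2)).odd_of_left⟩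

theorem sum_two_pow_fin_lt {g : ℕ} (S : Finset (Fin g)) : ∑ t ∈ S, 2 ^ (t : ℕ) < 2 ^ g := by
  simpa using Nat.geomSum_lt (s := S.map Fin.valEmbedding) le_rfl (by simp)

theorem sum_two_pow_fin_injective (g : ℕ) :
    Function.Injective fun S : Finset (Fin g) => ∑ t ∈ S, 2 ^ (t : ℕ) := by
  intro S S' h
  refine map_injective Fin.valEmbedding (geomSum_injective le_rfl ?_)
  simpa using h

theorem sum_two_pow_mul_add_eq {g : ℕ} (S : Finset (Fin g)) (p : Fin g → ℕ) :
    ∑ t ∈ S, 2 ^ (g * p t + t) = ∑ t ∈ S with p t = 0, 2 ^ (t : ℕ) +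
      2 ^ g * ∑ t ∈ S with p t ≠ 0, 2 ^ (g * (p t - 1) + t) := by
  rw [← sum_filter_add_sum_filter_not S (p · = 0), mul_sum]
  congr 1 <;> refine sum_congr rfl fun t ht => ?_
  · simp [(mem_filter.1 ht).2]
  · obtain ⟨k, hk⟩ : ∃ k, p t = k + 1 := ⟨p t - 1, by have := (mem_filter.1 ht).2; omega⟩
    rw [hk, ← pow_add, Nat.add_sub_cancel]
    ring

theorem eq_and_eq_of_add_mul_add_mul {q a b x a' b' x' : ℕ} (ha : a < q) (hb : b < q)
    (ha' : a' < q) (hb' : b' < q) (h : a + q * (b + q * x) = a' + q * (b' + q * x')) :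
    a = a' ∧ b = b' := by
  have hq : 0 < q := by omega
  have hmod := congrArg (· % q) h
  have hdiv := congrArg (· / q % q) h
  simp only [Nat.add_mul_mod_self_left, Nat.mod_eq_of_lt ha, Nat.mod_eq_of_lt ha',
    Nat.add_mul_div_left _ _ hq, Nat.div_eq_of_lt ha, Nat.div_eq_of_lt ha', zero_add,
    Nat.mod_eq_of_lt hb, Nat.mod_eq_of_lt hb'] at hmod hdiv
  exact ⟨hmod, hdiv⟩

theorem not_geom_sum_dvd_sum_two_pow {g r : ℕ} (hg : 0 < g) (hr : 2 ≤ r) (p : Fin g → ℕ)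
    (hp : ∀ t, p t < r) : ¬ (∑ j ∈ range r, (2 ^ g) ^ j) ∣ ∑ t, 2 ^ (g * p t + t) := by
  rintro ⟨c, hc⟩
  set T := ∑ t, 2 ^ (g * p t + t) with hT
  have hTlt : T < (2 ^ g) ^ r := calc
    T ≤ ∑ t : Fin g, (2 ^ g) ^ (r - 1) * 2 ^ (t : ℕ) := sum_le_sum fun t _ => by
        rw [← pow_mul, ← pow_add]
        exact Nat.pow_le_pow_right two_pos
          (Nat.add_le_add_right (Nat.mul_le_mul_left g (by have := hp t; omega)) _)
    _ < (2 ^ g) ^ (r - 1) * 2 ^ g := by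
        rw [← mul_sum]
        exact Nat.mul_lt_mul_of_pos_left (sum_two_pow_fin_lt univ) (by positivity)
    _ = (2 ^ g) ^ r := by rw [← pow_succ, Nat.sub_add_cancel (by omega)]
  have hc_lt : c < 2 ^ g := by
    by_contra! h
    have : (2 ^ g) ^ (r - 1) ≤ ∑ j ∈ range r, (2 ^ g) ^ j :=
      single_le_sum (fun _ _ => Nat.zero_le _) (mem_range.2 (by omega))
    have := Nat.mul_le_mul this h
    rw [← pow_succ, Nat.sub_add_cancel (by omega), ← hc] at this
    omega
  have hT_pos : 0 < T := sum_pos (fun _ _ => by positivity) ⟨⟨0, hg⟩, mem_univ _⟩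
  have hc_pos : 0 < c := Nat.pos_of_ne_zero fun h => by
    rw [h, mul_zero] at hc
    omega
  -- The two lowest base-`2 ^ g` digits of `T` are the sums of `2 ^ t` over `p⁻¹ 0` and
  -- `p⁻¹ 1`; those of `Q * c` are both `c`.
  obtain ⟨r', rfl⟩ := Nat.exists_eq_add_of_le hr
  have hQc : (∑ j ∈ range (2 + r'), (2 ^ g) ^ j) * c =
      c + 2 ^ g * (c + 2 ^ g * (c * ∑ j ∈ range r', (2 ^ g) ^ j)) := by
    rw [add_comm 2, sum_range_succ', sum_range_succ']
    simp only [pow_succ, ← sum_mul]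
    ring
  have hdigits : T = ∑ t with p t = 0, 2 ^ (t : ℕ) +
      2 ^ g * (∑ t with p t = 1, 2 ^ (t : ℕ) +
      2 ^ g * ∑ t ∈ {t | p t ≠ 0} with p t - 1 ≠ 0, 2 ^ (g * (p t - 1 - 1) + t)) := by
    rw [hT, sum_two_pow_mul_add_eq, sum_two_pow_mul_add_eq (p := (p · - 1)), filter_filter]
    congr 4
    ext t
    simp only [mem_filter, mem_univ, true_and]
    omega
  obtain ⟨h0, h1⟩ := eq_and_eq_of_add_mul_add_mul (sum_two_pow_fin_lt _) (sum_two_pow_fin_lt _)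
    hc_lt hc_lt (hdigits.symm.trans (hc.trans hQc))
  have hsets := sum_two_pow_fin_injective g (h0.trans h1.symm)
  obtain ⟨t, ht⟩ : ({t | p t = 0} : Finset (Fin g)).Nonempty := by
    rw [nonempty_iff_ne_empty]
    rintro h
    simp [h] at h0
    omega
  have ht' := hsets ▸ ht
  simp only [mem_filter, mem_univ, true_and] at ht ht'
  omega

theorem geom_sum_dvd_of_dvd_pow_sub_one_mul {g r i T : ℕ} (hg : 0 < g)
    (hgcd : i.gcd (g * r) = g) (h : 2 ^ (g * r) - 1 ∣ (2 ^ i - 1) * T) :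
    (∑ j ∈ range r, (2 ^ g) ^ j) ∣ T := by
  have hd : (2 ^ i - 1).gcd (2 ^ (g * r) - 1) = 2 ^ g - 1 := by
    rw [Nat.pow_sub_one_gcd_pow_sub_one, hgcd]
  have hd_pos : 0 < (2 ^ i - 1).gcd (2 ^ (g * r) - 1) := by
    rw [hd]; exact Nat.sub_pos_of_lt (Nat.one_lt_two_pow hg.ne')
  have hQ : ∑ j ∈ range r, (2 ^ g) ^ j =
      (2 ^ (g * r) - 1) / (2 ^ i - 1).gcd (2 ^ (g * r) - 1) := by
    rw [Nat.geomSum_eq (Nat.le_self_pow hg.ne' 2), ← pow_mul, hd]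
  rw [hQ]
  refine (Nat.coprime_div_gcd_div_gcd hd_pos).symm.dvd_of_dvd_mul_left ?_
  rw [Nat.div_mul_right_comm (Nat.gcd_dvd_left _ _)]
  exact Nat.div_dvd_div (Nat.gcd_dvd_right _ _) h

theorem sum_pow_two_pow_mul_coprime {R : Type*} [CommSemiring R] {x : R} {g r i' : ℕ}
    (hx : x ^ 2 ^ (g * r) = x) (hcop : i'.Coprime r) :
    ∑ j ∈ range r, x ^ 2 ^ (g * i' * j) = ∑ j ∈ range r, x ^ 2 ^ (g * j) := by
  have hmod (k : ℕ) : x ^ 2 ^ (g * k) = x ^ 2 ^ (g * (k % r)) := by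
    rw [pow_pow_eq_pow_pow_mod hx, Nat.mul_mod_mul_left]
  have hmaps : Set.MapsTo (fun j => i' * j % r) (range r : Set ℕ) (range r) := fun j hj =>
    mem_range.2 (Nat.mod_lt _ (by simp at hj; omega))
  have hinj : Set.InjOn (fun j => i' * j % r) (range r : Set ℕ) := fun j hj k hk hjk =>
    (Nat.ModEq.cancel_left_of_coprime (hcop.symm) hjk).eq_of_lt_of_lt
      (mem_range.1 hj) (mem_range.1 hk)
  refine sum_nbij (fun j => i' * j % r) hmaps hinj
    (surjOn_of_injOn_of_card_le _ hmaps hinj le_rfl) fun j _ => ?_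
  rw [mul_assoc, hmod]

section CharTwo

variable {R : Type*} [CommSemiring R] [ExpChar R 2]

theorem sum_pow_two_pow_mul_pow_sub_one (x : R) (g r : ℕ) :
    (∑ j ∈ range r, x ^ 2 ^ (g * j)) ^ (2 ^ g - 1) =
      ∑ p ∈ Fintype.piFinset fun _ : Fin g => range r, x ^ ∑ t, 2 ^ (g * p t + t) := by
  have hexp : 2 ^ g - 1 = ∑ t : Fin g, 2 ^ (t : ℕ) := by
    rw [Fin.sum_univ_eq_sum_range (2 ^ ·), Nat.geomSum_eq le_rfl]
    simp
  rw [hexp, ← prod_pow_eq_pow_sum]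
  simp_rw [sum_pow_char_pow, ← pow_mul, ← pow_add]
  rw [prod_univ_sum]
  simp_rw [prod_pow_eq_pow_sum]

theorem exists_pow_two_pow_add_self_eq {x : R} {i s : ℕ}
    (hx : x ^ 2 ^ (i * (2 * s + 1)) = x)
    (htr : ∑ k ∈ range (2 * s + 1), x ^ 2 ^ (i * k) = 0) :
    ∃ A : R, A ^ 2 ^ i + A = x := by
  have hpair (n : ℕ) : ∑ j ∈ range n, x ^ 2 ^ (i * (2 * j)) +
      (∑ j ∈ range n, x ^ 2 ^ (i * (2 * j))) ^ 2 ^ i =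
        ∑ k ∈ range (2 * n), x ^ 2 ^ (i * k) := by
    induction n with
    | zero => simp
    | succ n ih =>
      rw [sum_pow_char_pow] at ih ⊢
      rw [sum_range_succ, sum_range_succ, show 2 * (n + 1) = 2 * n + 1 + 1 by ring,
        sum_range_succ, sum_range_succ, ← ih, ← pow_mul, ← pow_add, mul_add_one]
      ring
  refine ⟨∑ j ∈ range (s + 1), x ^ 2 ^ (i * (2 * j)), ?_⟩
  rw [add_comm, hpair, show 2 * (s + 1) = 2 * s + 1 + 1 by ring, sum_range_succ, htr, zero_add, hx]

theorem pow_two_pow_mul_eq_add_natCast {w : R} {g : ℕ} (hw : w ^ 2 ^ g = w + 1) (k : ℕ) :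
    w ^ 2 ^ (g * k) = w + k := by
  induction k with
  | zero => simp
  | succ k ih =>
    rw [mul_add_one, pow_add, pow_mul, ih, add_pow_expChar_pow, hw, ← iterateFrobenius_def,
      map_natCast]
    push_cast
    ring

end CharTwo

theorem sum_pow_two_pow_mul_pow_two_pow {R : Type*} [CommRing R] [ExpChar R 2] {x : R} {g r : ℕ}
    (hx : x ^ 2 ^ (g * r) = x) :
    (∑ j ∈ range r, x ^ 2 ^ (g * j)) ^ 2 ^ g = ∑ j ∈ range r, x ^ 2 ^ (g * j) := by
  have hshift (j : ℕ) : (x ^ 2 ^ (g * j)) ^ 2 ^ g = x ^ 2 ^ (g * (j + 1)) := by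
    rw [← pow_mul, ← pow_add, mul_add_one]
  rw [sum_pow_char_pow]
  simp only [hshift]
  have h1 := sum_range_succ (fun j => x ^ 2 ^ (g * j)) r
  have h2 := sum_range_succ' (fun j => x ^ 2 ^ (g * j)) r
  rw [hx] at h1
  rw [mul_zero, pow_zero, pow_one] at h2
  exact add_right_cancel (h2.symm.trans h1)

section FiniteField

variable {K : Type*} [Field K] [Fintype K] [CharP K 2]

theorem exists_ne_zero_sum_pow_pow_two_pow_eq_zero {g r i : ℕ}
    (hK : Fintype.card K = 2 ^ (g * r)) (hr : 2 ≤ r) (hgcd : i.gcd (g * r) = g) :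
    ∃ z : K, z ≠ 0 ∧ ∑ j ∈ range r, (z ^ (2 ^ i - 1)) ^ 2 ^ (g * j) = 0 := by
  have hg : 0 < g := Nat.pos_of_ne_zero fun h => by
    have := Fintype.one_lt_card (α := K)
    simp [hK, h] at this
  by_contra! hne
  have hone (u : Kˣ) :
      (∑ j ∈ range r, ((u : K) ^ (2 ^ i - 1)) ^ 2 ^ (g * j)) ^ (2 ^ g - 1) = 1 := by
    set y := ∑ j ∈ range r, ((u : K) ^ (2 ^ i - 1)) ^ 2 ^ (g * j)
    have hy : y ^ 2 ^ g = y :=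
      sum_pow_two_pow_mul_pow_two_pow (by rw [← hK, FiniteField.pow_card])
    have hy0 : y ≠ 0 := hne _ u.ne_zero
    rw [← mul_left_inj' hy0, ← pow_succ, Nat.sub_add_cancel Nat.one_le_two_pow, hy, one_mul]
  refine neg_ne_zero.2 (one_ne_zero (α := K)) ?_
  calc (-1 : K)
      = ∑ u : Kˣ, (∑ j ∈ range r, ((u : K) ^ (2 ^ i - 1)) ^ 2 ^ (g * j)) ^ (2 ^ g - 1) := by
        simpa [hone] using (FiniteField.sum_pow_units K 0).symm
    _ = 0 := by
      simp_rw [sum_pow_two_pow_mul_pow_sub_one, ← pow_mul]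
      rw [sum_comm]
      refine sum_eq_zero fun p hp => ?_
      rw [FiniteField.sum_pow_units, hK, if_neg fun hdvd => not_geom_sum_dvd_sum_two_pow hg hr p
        (fun t => mem_range.1 (Fintype.mem_piFinset.1 hp t))
        (geom_sum_dvd_of_dvd_pow_sub_one_mul hg hgcd hdvd)]

theorem exists_ne_zero_pow_two_pow_add_self_eq {m i g r i' : ℕ} (hK : Fintype.card K = 2 ^ m)
    (hm : m = r * g) (hi : i = i' * g) (hr : Odd r) (hr1 : r ≠ 1) (hcop : i'.Coprime r) :
    ∃ z A : K, z ≠ 0 ∧ A ^ 2 ^ i + A = (z ^ (2 ^ i - 1)) ^ 2 ^ i := by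
  obtain ⟨s, rfl⟩ := hr
  rw [hm, mul_comm] at hK
  have hgcd : i.gcd (g * (2 * s + 1)) = g := by
    rw [hi, mul_comm, Nat.gcd_mul_left, hcop.gcd_eq_one, mul_one]
  obtain ⟨z, hz, htr⟩ := exists_ne_zero_sum_pow_pow_two_pow_eq_zero hK (by omega) hgcd
  have hx : (z ^ (2 ^ i - 1)) ^ 2 ^ (g * (2 * s + 1)) = z ^ (2 ^ i - 1) := by
    rw [← hK, FiniteField.pow_card]
  rw [← sum_pow_two_pow_mul_coprime hx hcop, mul_comm g, ← hi] at htr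
  obtain ⟨A, hA⟩ := exists_pow_two_pow_add_self_eq (by
    rw [pow_pow_eq_pow_pow_mod hx, hi, show i' * g * (2 * s + 1) = g * (2 * s + 1) * i' by ring,
      Nat.mul_mod_right, pow_zero, pow_one]) htr
  exact ⟨z, A ^ 2 ^ i, hz, by rw [← add_pow_expChar_pow, hA]⟩

theorem exists_pow_two_pow_eq_add_one {g n : ℕ} (hK : Fintype.card K = 2 ^ n)
    (hgn : 2 * g ∣ n) : ∃ w : K, w ^ 2 ^ g = w + 1 := by
  have hd : 2 ^ g + 1 ∣ Fintype.card Kˣ := by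
    rw [Fintype.card_units, hK]
    calc 2 ^ g + 1 ∣ (2 ^ g) ^ 2 - 1 ^ 2 := Dvd.intro _ (Nat.sq_sub_sq _ _).symm
      _ ∣ 2 ^ n - 1 := by
        rw [one_pow, ← pow_mul]
        exact Nat.pow_sub_one_dvd_pow_sub_one 2 (by rwa [mul_comm])
  have hp : (2 ^ g + 1).minFac.Prime :=
    Nat.minFac_prime (by have := Nat.one_le_two_pow (n := g); omega)
  have := Fact.mk hp
  obtain ⟨l, hl⟩ := exists_prime_orderOf_dvd_card _ ((Nat.minFac_dvd _).trans hd)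
  have hl1 : (l : K) ≠ 1 := fun h => by
    rw [Units.val_eq_one.1 h, orderOf_one] at hl
    exact hp.one_lt.ne hl
  have hl_inv : (l : K) ^ 2 ^ g * l = 1 := by
    rw [← pow_succ, ← Units.val_pow_eq_pow_val,
      orderOf_dvd_iff_pow_eq_one.1 (hl ▸ Nat.minFac_dvd _), Units.val_one]
  have hl0 : (l : K) ≠ 0 := l.ne_zero
  have hl1' : 1 + (l : K) ≠ 0 := fun h =>
    hl1 (by linear_combination h - CharTwo.two_eq_zero (R := K))
  refine ⟨(1 + l)⁻¹, ?_⟩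
  rw [inv_pow, add_pow_expChar_pow, one_pow]
  refine (eq_inv_of_mul_eq_one_left (mul_right_cancel₀ hl0 ?_)).symm
  linear_combination inv_mul_cancel₀ hl1' + ((1 + (l : K))⁻¹ + 1) * hl_inv +
    CharTwo.two_eq_zero (R := K)

theorem exists_pow_two_pow_eq_add_one_and_pow_two_pow_eq {g r k : ℕ} (hr : Odd r) (hk : Even k)
    (hK : Fintype.card K = 2 ^ (2 * (r * g))) :
    ∃ w : K, w ^ 2 ^ (r * g) = w + 1 ∧ w ^ 2 ^ (k * g) = w := by
  obtain ⟨w, hw⟩ := exists_pow_two_pow_eq_add_one (g := g) hK ⟨r, by ring⟩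
  obtain ⟨s, rfl⟩ := hr
  obtain ⟨k, rfl⟩ := hk
  refine ⟨w, ?_, ?_⟩ <;> rw [mul_comm, pow_two_pow_mul_eq_add_natCast hw] <;> push_cast
  · linear_combination s * CharTwo.two_eq_zero (R := K)
  · linear_combination k * CharTwo.two_eq_zero (R := K)

end FiniteField

theorem exists_solution_of_pow_two_pow_add_self_eq {L : Type*} [Field L] [CharP L 2] {m i : ℕ}
    {z c : L} (hz : z ≠ 0) (hzm : z ^ 2 ^ m = z) (hcm : c ^ 2 ^ m = c + 1)
    (hci : c ^ 2 ^ i + c = (z ^ (2 ^ i - 1)) ^ 2 ^ i) :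
    ∃ a y : L, a ^ 2 ^ m ≠ a ∧ y ≠ 0 ∧
      a ^ 2 ^ i * y ^ 2 ^ (2 * i) + (a + a ^ 2 ^ m) ^ 2 ^ i * y ^ 2 ^ (m + i) + a * y = 0 := by
  set β := z ^ (2 ^ i + 1)
  have hβ : β ≠ 0 := pow_ne_zero _ hz
  have ham : (β * c) ^ 2 ^ m = β * c + β := by
    rw [mul_pow, pow_right_comm, hzm, hcm, mul_add_one]
  refine ⟨β * c, z⁻¹, by simpa [ham] using hβ, inv_ne_zero hz, ?_⟩
  have hsum : β * c + (β * c + β) = β := by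
    rw [← add_assoc, CharTwo.add_self_eq_zero, zero_add]
  set Z := z ^ 2 ^ i
  have hz2i : z ^ 2 ^ (2 * i) = Z ^ 2 ^ i := by rw [← pow_mul, ← pow_add, two_mul]
  have hzmi : z⁻¹ ^ 2 ^ (m + i) = Z⁻¹ := by rw [pow_add, pow_mul, inv_pow, hzm, inv_pow]
  have hβZ : β = Z * z := pow_succ z (2 ^ i)
  have hV : (z ^ (2 ^ i - 1)) ^ 2 ^ i * Z = Z ^ 2 ^ i := by
    rw [← mul_pow, ← pow_succ, Nat.sub_add_cancel Nat.one_le_two_pow]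
  have hZ : Z ≠ 0 := pow_ne_zero _ hz
  have hW : Z ^ 2 ^ i = (c ^ 2 ^ i + c) * Z := by rw [hci, hV]
  rw [ham, hsum, inv_pow, hz2i, hzmi, hβZ, mul_pow, mul_pow]
  field_simp
  rw [show z ^ 2 ^ i = Z from rfl]
  linear_combination Z * hW + Z ^ 2 * (c ^ 2 ^ i + c) * CharTwo.two_eq_zero (R := L)

theorem stmt17 (m : ℕ) (i : ℕ) (hi1 : 1 ≤ i) (hi2 : i ≤ m - 1)
    (hv : padicValNat 2 m < padicValNat 2 i) :
    ∃ a y : GF (2*m), a ^ 2 ^ m ≠ a ∧ y ≠ 0 ∧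
      a ^ 2 ^ i * y ^ 2 ^ (2*i) + (a + a ^ 2 ^ m) ^ 2 ^ i * y ^ 2 ^ (m + i)
        + a * y = 0 := by
  obtain ⟨i', r, hcop, hi, hm⟩ := Nat.exists_coprime i m
  generalize i.gcd m = g at hi hm
  have hr0 : r ≠ 0 := by rintro rfl; omega
  obtain ⟨hi', hr⟩ := even_and_odd_of_padicValNat_lt hcop hr0 (by rwa [← hi, ← hm])
  have hr1 : r ≠ 1 := by
    rintro rfl
    have := Nat.le_of_dvd (by omega) (Dvd.intro_left i' hi.symm)
    omega
  have hm0 : m ≠ 0 := by omega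
  have hK : Fintype.card (GaloisField 2 m) = 2 ^ m := by
    rw [Fintype.card_eq_nat_card, GaloisField.card 2 m hm0]
  obtain ⟨z, A, hz, hA⟩ := exists_ne_zero_pow_two_pow_add_self_eq hK hm hi hr hr1 hcop
  obtain ⟨w, hwm, hwi⟩ :=
    exists_pow_two_pow_eq_add_one_and_pow_two_pow_eq (K := GF (2 * m)) hr hi'
      (by rw [Fintype.card_eq_nat_card, GaloisField.card 2 _ (by omega), hm])
  rw [← hm] at hwm
  rw [← hi] at hwi
  -- `K_m` is the image of `GaloisField 2 m` under an embedding into `GF (2 * m)`.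
  obtain ⟨φ⟩ := FiniteField.nonempty_algHom_of_finrank_dvd (F := ZMod 2) (K := GaloisField 2 m)
    (L := GF (2 * m)) (by rw [GaloisField.finrank 2 hm0, GaloisField.finrank 2 (by omega)]; simp)
  have hφ (x : GaloisField 2 m) : φ x ^ 2 ^ m = φ x := by
    rw [← map_pow, ← hK, FiniteField.pow_card]
  refine exists_solution_of_pow_two_pow_add_self_eq ((map_ne_zero φ).2 hz) (hφ z) (c := φ A + w)
    (by rw [add_pow_expChar_pow, hφ, hwm, add_assoc]) ?_
  rw [add_pow_expChar_pow, hwi, ← map_pow, ← map_pow, ← map_pow, ← hA, map_add]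
  linear_combination w * CharTwo.two_eq_zero (R := GF (2 * m))
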